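/- The cup product on the positive-degree cohomology of Λ(2l) is identically zero: the products α_{p₁}α_{p₂}, α_{p₁}β_{p₂}, and β_{p₁}β_{p₂} of representatives y₂^p x₁ − 2p y₁x₂y₂^{p−1} and y₁y₂^p are all exact. -/
import Mathlib


namespace LoopSphereModel

noncomputable section

/-- Basis of the Sullivan model `Λ(2l) = Λ(y₁,x₁,y₂,x₂)` of the free loop space
`LS^{2l}`: `(e, a, p, f)` codes the monomial `y₁^e · x₁^a · y₂^p · x₂^f`
(`e, f ∈ {0,1}` since `y₁, x₂` are odd; `x₁, y₂` are even). -/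
abbrev Bas : Type := Bool × ℕ × ℕ × Bool

/-- The underlying ℚ-vector space of `Λ(2l)`. -/
abbrev Mod : Type := Bas →₀ ℚ

/-- The basis monomial `y₁^e x₁^a y₂^p x₂^f`. -/
def mon (b : Bas) : Mod := Finsupp.single b 1

/-- Degree of a basis monomial: `|y₁| = 2l-1`, `|x₁| = 2l`, `|y₂| = 4l-2`,
`|x₂| = 4l-1`. -/
def mdeg (l : ℕ) (b : Bas) : ℕ :=
  (if b.1 then 2 * l - 1 else 0) + b.2.1 * (2 * l) + b.2.2.1 * (4 * l - 2) +
    (if b.2.2.2 then 4 * l - 1 else 0)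

/-- The differential on basis monomials, obtained by extending
`dy₁ = dx₁ = 0`, `dx₂ = x₁²`, `dy₂ = -2x₁y₁` as a degree `+1` derivation:
`d(y₁^e x₁^a y₂^p x₂^f) = (-2p)·y₁ x₁^{a+1} y₂^{p-1} x₂^f` (only when `e = 0`)
`+ (-1)^e · y₁^e x₁^{a+2} y₂^p` (only when `f = 1`). -/
def dmon (b : Bas) : Mod :=
  (if b.1 then 0
    else (-(2 * (b.2.2.1 : ℚ))) • mon (true, b.2.1 + 1, b.2.2.1 - 1, b.2.2.2)) +
  (if b.2.2.2 then
      (if b.1 then (-1 : ℚ) else 1) • mon (b.1, b.2.1 + 2, b.2.2.1, false)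
    else 0)

/-- The differential of `Λ(2l)` as a linear map. -/
def dL : Mod →ₗ[ℚ] Mod :=
  Finsupp.lsum ℚ fun b => LinearMap.toSpanSingleton ℚ Mod (dmon b)

/-- Product of two basis monomials in the free graded-commutative algebra:
zero if an odd generator repeats, otherwise the reordered monomial with the
Koszul sign `(-1)^{e'·f}` (moving `y₁'` past `x₂^f`). -/
def monMul (b b' : Bas) : Mod :=
  if b.1 && b'.1 then 0
  else if b.2.2.2 && b'.2.2.2 then 0
  else (if b'.1 && b.2.2.2 then (-1 : ℚ) else 1) •
    mon (b.1 || b'.1, b.2.1 + b'.2.1, b.2.2.1 + b'.2.2.1, b.2.2.2 || b'.2.2.2)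

/-- The (graded-commutative) multiplication of `Λ(2l)`, extended bilinearly. -/
def mulF (x y : Mod) : Mod :=
  x.sum fun b c => y.sum fun b' c' => (c * c') • monMul b b'

/-- The cocycle `α_p := y₂^p x₁ - 2p · y₁ x₂ y₂^{p-1}`
(in canonical order `x₁ y₂^p - 2p · y₁ y₂^{p-1} x₂`). -/
def alphaEl (p : ℕ) : Mod :=
  mon (false, 1, p, false) - (2 * (p : ℚ)) • mon (true, 0, p - 1, true)

/-- The cocycle `β_p := y₁ y₂^p`. -/
def betaEl (p : ℕ) : Mod := mon (true, 0, p, false)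


lemma dL_mon (b : Bas) : dL (mon b) = dmon b := by
  simp [dL, mon]

lemma mulF_single_left (b : Bas) (c : ℚ) (y : Mod) :
    mulF (Finsupp.single b c) y = y.sum fun b' c' => (c * c') • monMul b b' := by
  unfold mulF
  rw [Finsupp.sum_single_index]
  simp

lemma mulF_single_single (b b' : Bas) (c c' : ℚ) :
    mulF (Finsupp.single b c) (Finsupp.single b' c') = (c * c') • monMul b b' := by
  rw [mulF_single_left, Finsupp.sum_single_index]
  simp

lemma mulF_add_left (x y z : Mod) : mulF (x + y) z = mulF x z + mulF y z := by
  unfold mulF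
  rw [Finsupp.sum_add_index'] <;> intros <;>
    simp [add_mul, add_smul, Finsupp.sum_add]

lemma mulF_add_right (x y z : Mod) : mulF x (y + z) = mulF x y + mulF x z := by
  unfold mulF
  rw [← Finsupp.sum_add]
  refine Finsupp.sum_congr fun b _ => ?_
  rw [Finsupp.sum_add_index'] <;> intros <;> simp [mul_add, add_smul]

lemma alphaEl_eq (p : ℕ) : alphaEl p =
    Finsupp.single ((false,1,p,false) : Bas) (1:ℚ) +
    Finsupp.single ((true,0,p-1,true) : Bas) (-(2*(p:ℚ))) := by
  simp [alphaEl, mon, Finsupp.smul_single, sub_eq_add_neg]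

lemma betaEl_eq (p : ℕ) : betaEl p = Finsupp.single ((true,0,p,false) : Bas) (1:ℚ) := rfl

lemma exact_beta_beta (p₁ p₂ : ℕ) : dL (0 : Mod) = mulF (betaEl p₁) (betaEl p₂) := by
  simp [betaEl_eq, mulF_single_single, monMul]

lemma exact_alpha_beta (p₁ p₂ : ℕ) :
    dL ((-(1/(2*((p₁:ℚ)+p₂+1)))) • mon (false,0,p₁+p₂+1,false))
      = mulF (alphaEl p₁) (betaEl p₂) := by
  rw [alphaEl_eq, betaEl_eq, mulF_add_left]
  simp only [mulF_single_single, map_smul, dL_mon]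
  simp only [monMul, dmon, Bool.false_and, Bool.and_false, Bool.true_and, Bool.and_true,
    Bool.false_or, Bool.or_false, Bool.true_or, Bool.or_true, Bool.and_self, Bool.or_self,
    Bool.false_eq_true, Bool.true_eq_false, if_false, if_true, ite_true, ite_false,
    smul_zero, zero_smul, mul_one, one_mul, mul_zero, zero_mul, zero_add, add_zero,
    smul_smul, smul_eq_mul, Nat.add_sub_cancel, one_smul, Nat.cast_zero, Nat.cast_add,
    Nat.cast_one]
  have h : ((p₁:ℚ) + p₂ + 1) ≠ 0 := by positivity
  rw [show -(1/(2*((p₁:ℚ)+p₂+1))) * -(2*((p₁:ℚ)+p₂+1)) = 1 from by field_simp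
    , one_smul]

lemma exact_alpha_alpha (p₁ p₂ : ℕ) :
    dL (mon (false,0,p₁+p₂,true)) = mulF (alphaEl p₁) (alphaEl p₂) := by
  rw [alphaEl_eq, alphaEl_eq, mulF_add_left, mulF_add_right, mulF_add_right]
  simp only [mulF_single_single, dL_mon]
  rcases p₁ with _ | m <;> rcases p₂ with _ | n <;>
    simp only [monMul, dmon, Bool.false_and, Bool.and_false, Bool.true_and, Bool.and_true,
      Bool.false_or, Bool.or_false, Bool.true_or, Bool.or_true, Bool.and_self, Bool.or_self,
      Bool.false_eq_true, Bool.true_eq_false, if_false, if_true, ite_true, ite_false,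
      smul_zero, zero_smul, mul_one, one_mul, mul_zero, zero_mul, zero_add, add_zero,
      smul_smul, smul_eq_mul, Nat.add_sub_cancel, one_smul, Nat.cast_zero, Nat.cast_add,
      Nat.cast_one]
  all_goals try module
  all_goals
    rw [show m + (n + 1) = m + 1 + n from by omega,
      show m + 1 + (n + 1) - 1 = m + 1 + n from by omega,
      show (1 + 1 : ℕ) = 2 from rfl]
    module

/-- The cup product on positive-degree cohomology of `Λ(2l)` vanishes: the
products `α_{p₁}α_{p₂}`, `α_{p₁}β_{p₂}` and `β_{p₁}β_{p₂}` of the closed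
representatives are all exact. -/
theorem cup_products_exact : ∀ p₁ p₂ : ℕ,
    (∃ s, dL s = mulF (alphaEl p₁) (alphaEl p₂)) ∧
    (∃ s, dL s = mulF (alphaEl p₁) (betaEl p₂)) ∧
    (∃ s, dL s = mulF (betaEl p₁) (betaEl p₂)) := by
  intro p₁ p₂
  exact ⟨⟨_, exact_alpha_alpha p₁ p₂⟩, ⟨_, exact_alpha_beta p₁ p₂⟩, ⟨_, exact_beta_beta p₁ p₂⟩⟩

end

end LoopSphereModel
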